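/- arXiv:2604.10752 — 7 statements merged into one kernel-verified Lean document; each statement's English description precedes it below -/
import Mathlib

section
/- Suppose the feasible class U is nonempty and there exists a probability vector η̄ on A^r such that η_u = η̄ for every u ∈ U. Then the maximizer of the entropy-rate functional J on U is unique: there exists a unique u* ∈ U such that J(u) ≤ J(u*) for all u ∈ U, and any v ∈ U with J(v) = J(u*) equals u*. -/
open Finset

/-- Context marginal of a block law on `A^(n+1) × A` (contexts are `Fin (n+1) → A`,
so the memory length is `r = n+1 ≥ 1`). -/
noncomputable def eta {A : Type*} [Fintype A] {n : ℕ}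
    (u : (Fin (n + 1) → A) → A → ℝ) (c : Fin (n + 1) → A) : ℝ :=
  ∑ a, u c a

/-- Entropy-rate functional.  In Lean, `Real.log 0 = 0` and `0 * x = 0`, so the
conventions `0·log 0 = 0` and "terms with `u(c,a) = 0` contribute `0`" hold
automatically. -/
noncomputable def J {A : Type*} [Fintype A] {n : ℕ}
    (u : (Fin (n + 1) → A) → A → ℝ) : ℝ :=
  -∑ c, ∑ a, u c a * Real.log (u c a / eta u c)

/-- A block law: nonnegative entries with total mass one. -/
def IsBlockLaw {A : Type*} [Fintype A] {n : ℕ}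
    (u : (Fin (n + 1) → A) → A → ℝ) : Prop :=
  (∀ c a, 0 ≤ u c a) ∧ ∑ c, ∑ a, u c a = 1

/-- The context `(α, d₁, …, d_{r-1})` obtained from `d = (d₁, …, d_r)` by
prepending `α` and dropping the last entry. -/
def shiftCtx {A : Type*} {n : ℕ} (α : A) (d : Fin (n + 1) → A) : Fin (n + 1) → A :=
  Fin.cons α (fun i : Fin n => d i.castSucc)

/-- Stationary consistency:
`∑_α u((α,d₁,…,d_{r-1}), d_r) = ∑_β u(d, β)` for every block `d`. -/
def StationaryConsistent {A : Type*} [Fintype A] {n : ℕ}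
    (u : (Fin (n + 1) → A) → A → ℝ) : Prop :=
  ∀ d : Fin (n + 1) → A,
    ∑ α : A, u (shiftCtx α d) (d (Fin.last n)) = ∑ β : A, u d β

/-- The feasible class determined by features `G` and targets `b`. -/
def Feasible {A : Type*} [Fintype A] {n m : ℕ}
    (G : Fin m → (Fin (n + 1) → A) → A → ℝ) (b : Fin m → ℝ)
    (u : (Fin (n + 1) → A) → A → ℝ) : Prop :=
  IsBlockLaw u ∧ StationaryConsistent u ∧
    ∀ j, ∑ c, ∑ a, u c a * G j c a = b j

/-! ### Auxiliary material for the proof -/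

/-- Shannon entropy of a block law (sum of `negMulLog` over all entries). -/
noncomputable def Hsum {A : Type*} [Fintype A] {n : ℕ}
    (u : (Fin (n + 1) → A) → A → ℝ) : ℝ :=
  ∑ c, ∑ a, Real.negMulLog (u c a)

lemma negMulLog_mid_le {x y : ℝ} (hx : 0 ≤ x) (hy : 0 ≤ y) :
    (Real.negMulLog x + Real.negMulLog y) / 2 ≤ Real.negMulLog ((x + y) / 2) := by
  have h := Real.concaveOn_negMulLog.2 (Set.mem_Ici.2 hx) (Set.mem_Ici.2 hy)
    (by norm_num : (0:ℝ) ≤ 1/2) (by norm_num : (0:ℝ) ≤ 1/2) (by norm_num)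
  simp only [smul_eq_mul] at h
  have hxy : (x + y) / 2 = 1/2 * x + 1/2 * y := by ring
  rw [hxy]; linarith

lemma negMulLog_mid_lt {x y : ℝ} (hx : 0 ≤ x) (hy : 0 ≤ y) (hne : x ≠ y) :
    (Real.negMulLog x + Real.negMulLog y) / 2 < Real.negMulLog ((x + y) / 2) := by
  have h := Real.strictConcaveOn_negMulLog.2 (Set.mem_Ici.2 hx) (Set.mem_Ici.2 hy) hne
    (by norm_num : (0:ℝ) < 1/2) (by norm_num : (0:ℝ) < 1/2) (by norm_num)
  simp only [smul_eq_mul] at h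
  have hxy : (x + y) / 2 = 1/2 * x + 1/2 * y := by ring
  rw [hxy]; linarith

lemma J_eq_Hsum {A : Type*} [Fintype A] {n : ℕ} (u : (Fin (n + 1) → A) → A → ℝ)
    (h0 : ∀ c a, 0 ≤ u c a) :
    J u = Hsum u + ∑ c, eta u c * Real.log (eta u c) := by
  have percontext : ∀ c, -∑ a, u c a * Real.log (u c a / eta u c)
      = (∑ a, Real.negMulLog (u c a)) + eta u c * Real.log (eta u c) := by
    intro c
    by_cases hc : eta u c = 0
    · have hz : ∀ a, u c a = 0 := fun a =>
        (Finset.sum_eq_zero_iff_of_nonneg (fun a _ => h0 c a)).mp hc a (mem_univ a)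
      simp [hz, hc, Real.negMulLog]
    · have key : ∀ a, u c a * Real.log (u c a / eta u c)
          = u c a * Real.log (u c a) - u c a * Real.log (eta u c) := by
        intro a
        by_cases ha : u c a = 0
        · simp [ha]
        · rw [Real.log_div ha hc, mul_sub]
      simp only [key, Finset.sum_sub_distrib, ← Finset.sum_mul]
      simp only [Real.negMulLog, neg_mul, Finset.sum_neg_distrib, eta]
      ring
  rw [J, ← Finset.sum_neg_distrib, Hsum, ← Finset.sum_add_distrib]
  exact Finset.sum_congr rfl fun c _ => percontext c

/-- The feasible class is closed. -/
lemma isClosed_feasible {A : Type*} [Fintype A] {n m : ℕ}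
    (G : Fin m → (Fin (n + 1) → A) → A → ℝ) (b : Fin m → ℝ) :
    IsClosed {u : (Fin (n + 1) → A) → A → ℝ | Feasible G b u} := by
  have hev : ∀ (c : Fin (n + 1) → A) (a : A),
      Continuous fun u : (Fin (n + 1) → A) → A → ℝ => u c a := fun c a =>
    (continuous_apply a).comp (continuous_apply c)
  have hset : {u : (Fin (n + 1) → A) → A → ℝ | Feasible G b u} =
      ((⋂ c, ⋂ a, {u : (Fin (n + 1) → A) → A → ℝ | 0 ≤ u c a}) ∩
        {u | ∑ c, ∑ a, u c a = 1}) ∩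
      ((⋂ d, {u : (Fin (n + 1) → A) → A → ℝ |
          ∑ α : A, u (shiftCtx α d) (d (Fin.last n)) = ∑ β : A, u d β}) ∩
        (⋂ j, {u : (Fin (n + 1) → A) → A → ℝ | ∑ c, ∑ a, u c a * G j c a = b j})) := by
    ext u
    simp only [Feasible, IsBlockLaw, StationaryConsistent, Set.mem_setOf_eq,
      Set.mem_inter_iff, Set.mem_iInter]
  rw [hset]
  refine IsClosed.inter (IsClosed.inter ?_ ?_) (IsClosed.inter ?_ ?_)
  · exact isClosed_iInter fun c => isClosed_iInter fun a =>
      isClosed_le continuous_const (hev c a)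
  · exact isClosed_eq (continuous_finset_sum _ fun c _ =>
      continuous_finset_sum _ fun a _ => hev c a) continuous_const
  · exact isClosed_iInter fun d => isClosed_eq
      (continuous_finset_sum _ fun α _ => hev _ _)
      (continuous_finset_sum _ fun β _ => hev _ _)
  · exact isClosed_iInter fun j => isClosed_eq
      (continuous_finset_sum _ fun c _ =>
        continuous_finset_sum _ fun a _ => (hev c a).mul continuous_const)
      continuous_const

/-- Each entry of a block law lies in `[0, 1]`. -/
lemma blockLaw_entry_mem {A : Type*} [Fintype A] {n : ℕ}
    {u : (Fin (n + 1) → A) → A → ℝ} (hu : IsBlockLaw u)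
    (c : Fin (n + 1) → A) (a : A) : u c a ∈ Set.Icc (0 : ℝ) 1 := by
  refine ⟨hu.1 c a, ?_⟩
  have h1 : u c a ≤ ∑ a', u c a' :=
    Finset.single_le_sum (fun a' _ => hu.1 c a') (mem_univ a)
  have h2 : ∑ a', u c a' ≤ ∑ c', ∑ a', u c' a' :=
    Finset.single_le_sum (fun c' _ => Finset.sum_nonneg fun a' _ => hu.1 c' a')
      (mem_univ c)
  calc u c a ≤ ∑ c', ∑ a', u c' a' := h1.trans h2
    _ = 1 := hu.2

/-- The midpoint of two feasible laws is feasible. -/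
lemma feasible_mid {A : Type*} [Fintype A] {n m : ℕ}
    {G : Fin m → (Fin (n + 1) → A) → A → ℝ} {b : Fin m → ℝ}
    {u v : (Fin (n + 1) → A) → A → ℝ}
    (hu : Feasible G b u) (hv : Feasible G b v) :
    Feasible G b (fun c a => (u c a + v c a) / 2) := by
  refine ⟨⟨fun c a => div_nonneg (add_nonneg (hu.1.1 c a) (hv.1.1 c a)) (by norm_num), ?_⟩, ?_, ?_⟩
  · simp only [← Finset.sum_div, Finset.sum_add_distrib]
    rw [hu.1.2, hv.1.2]; norm_num
  · intro d
    simp only [← Finset.sum_div, Finset.sum_add_distrib]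
    rw [hu.2.1 d, hv.2.1 d]
  · intro j
    have key : ∀ (c : Fin (n + 1) → A) (a : A),
        (u c a + v c a) / 2 * G j c a = (u c a * G j c a + v c a * G j c a) / 2 := by
      intro c a; ring
    simp only [key, ← Finset.sum_div, Finset.sum_add_distrib]
    rw [hu.2.2 j, hv.2.2 j]; norm_num

/-- Strict concavity of `Hsum` at distinct nonnegative laws. -/
lemma Hsum_mid_gt {A : Type*} [Fintype A] {n : ℕ}
    {u v : (Fin (n + 1) → A) → A → ℝ}
    (hu0 : ∀ c a, 0 ≤ u c a) (hv0 : ∀ c a, 0 ≤ v c a) (hne : u ≠ v) :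
    (Hsum u + Hsum v) / 2 < Hsum (fun c a => (u c a + v c a) / 2) := by
  obtain ⟨c₀, a₀, hca⟩ : ∃ c a, u c a ≠ v c a := by
    by_contra h
    push_neg at h
    exact hne (funext fun c => funext fun a => h c a)
  have hH : ∀ w : (Fin (n + 1) → A) → A → ℝ,
      Hsum w = ∑ p : (Fin (n + 1) → A) × A, Real.negMulLog (w p.1 p.2) := by
    intro w; rw [Hsum, ← Fintype.sum_prod_type']
  rw [hH, hH, hH, ← Finset.sum_add_distrib, Finset.sum_div]
  refine Finset.sum_lt_sum (fun p _ => ?_) ⟨(c₀, a₀), mem_univ _, ?_⟩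
  · exact negMulLog_mid_le (hu0 p.1 p.2) (hv0 p.1 p.2)
  · exact negMulLog_mid_lt (hu0 c₀ a₀) (hv0 c₀ a₀) hca

/-- If the feasible class is nonempty and every feasible law has the
same context marginal `η̄` (a probability vector on `A^r`), then the maximizer of
`J` on the feasible class is unique: some feasible `u*` maximizes `J`, and any
feasible `v` attaining the value `J u*` equals `u*`. -/
theorem stmt1 {A : Type*} [Fintype A] [Nonempty A] {n m : ℕ}
    (G : Fin m → (Fin (n + 1) → A) → A → ℝ) (b : Fin m → ℝ)
    (hne : ∃ u, Feasible G b u)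
    (etabar : (Fin (n + 1) → A) → ℝ)
    (hetabar : (∀ c, 0 ≤ etabar c) ∧ ∑ c, etabar c = 1)
    (hfix : ∀ u, Feasible G b u → ∀ c, eta u c = etabar c) :
    ∃ ustar, (Feasible G b ustar ∧ ∀ u, Feasible G b u → J u ≤ J ustar) ∧
      ∀ v, Feasible G b v → J v = J ustar → v = ustar := by
  set S : Set ((Fin (n + 1) → A) → A → ℝ) := {u | Feasible G b u} with hS
  -- J equals Hsum plus a constant on S
  set K : ℝ := ∑ c, etabar c * Real.log (etabar c) with hK
  have hJH : ∀ u, Feasible G b u → J u = Hsum u + K := by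
    intro u hu
    rw [J_eq_Hsum u hu.1.1, hK]
    congr 1
    exact Finset.sum_congr rfl fun c _ => by rw [hfix u hu c]
  -- compactness of S
  have hsub : S ⊆ Set.pi Set.univ
      (fun _ : Fin (n + 1) → A => Set.pi Set.univ fun _ : A => Set.Icc (0 : ℝ) 1) := by
    intro u hu c _ a _
    exact blockLaw_entry_mem hu.1 c a
  have hcpt : IsCompact S := by
    refine (isCompact_univ_pi fun _ =>
      isCompact_univ_pi fun _ => isCompact_Icc).of_isClosed_subset
      (isClosed_feasible G b) hsub
  -- continuity of Hsum
  have hcont : Continuous (Hsum (A := A) (n := n)) := by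
    refine continuous_finset_sum _ fun c _ => continuous_finset_sum _ fun a _ => ?_
    exact Real.continuous_negMulLog.comp ((continuous_apply a).comp (continuous_apply c))
  obtain ⟨u0, hu0⟩ := hne
  obtain ⟨ustar, hmem, hmax⟩ := hcpt.exists_isMaxOn ⟨u0, hu0⟩ hcont.continuousOn
  have hmax' : ∀ u, Feasible G b u → Hsum u ≤ Hsum ustar := fun u hu =>
    isMaxOn_iff.mp hmax u hu
  have hmemF : Feasible G b ustar := hmem
  refine ⟨ustar, ⟨hmemF, fun u hu => ?_⟩, fun v hv heq => ?_⟩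
  · rw [hJH u hu, hJH ustar hmemF]
    linarith [hmax' u hu]
  · by_contra hvne
    have hweq : Hsum v = Hsum ustar := by
      have h1 := hJH v hv
      have h2 := hJH ustar hmemF
      linarith [heq]
    have hwfeas := feasible_mid hv hmemF
    have hlt := Hsum_mid_gt hv.1.1 hmemF.1.1 hvne
    have := hmax' _ hwfeas
    linarith
end

section
/- Let u and v be block laws on A^r × A and let t ∈ (0,1). Then J(t·u + (1−t)·v) ≥ t·J(u) + (1−t)·J(v). Moreover, equality holds if and only if η_v(c)·u(c,a) = η_u(c)·v(c,a) for every context c ∈ A^r and every symbol a ∈ A, i.e. if and only if for every context c the rows u(c,·) and v(c,·) are proportional. -/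
open Finset

open Real

/-!
With `φ(p, q) = p log (p / q)`, `J u = -∑ φ (u c a) (η_u c)` and `η` is linear in `u`, so concavity
of `J` reduces termwise to the two-term log-sum inequality
`φ(a + b, x + y) ≤ φ(a, x) + φ(b, y)`. Scaled by `x + y`, this is Jensen's inequality for
`z ↦ z log z` at `a / x` and `b / y` with weights `x / (x + y)`, `y / (x + y)`; strict convexity
makes it an equality exactly when `a / x = b / y`, i.e. when the rows are proportional.
-/

lemma mul_mul_log_div_self {a x : ℝ} (hx : x ≠ 0) :
    x * (a / x * log (a / x)) = a * log (a / x) := by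
  rw [← mul_assoc, mul_div_cancel₀ a hx]

lemma div_add_mul_div {a x y : ℝ} (hx : x ≠ 0) : x / (x + y) * (a / x) = a / (x + y) := by
  rw [div_mul_div_comm, mul_comm x a, mul_div_mul_right _ _ hx]

lemma add_mul_log_div_add_le_and_eq_iff_of_pos {a b x y : ℝ} (ha : 0 ≤ a) (hb : 0 ≤ b)
    (hx : 0 < x) (hy : 0 < y) :
    (a + b) * log ((a + b) / (x + y)) ≤ a * log (a / x) + b * log (b / y) ∧
      ((a + b) * log ((a + b) / (x + y)) = a * log (a / x) + b * log (b / y) ↔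
        a * y = b * x) := by
  have hxy : 0 < x + y := by positivity
  have hp : a / x ∈ Set.Ici (0 : ℝ) := div_nonneg ha hx.le
  have hq : b / y ∈ Set.Ici (0 : ℝ) := div_nonneg hb hy.le
  have hweights : x / (x + y) + y / (x + y) = 1 := by rw [← add_div, div_self hxy.ne']
  have hmix : (x / (x + y)) • (a / x) + (y / (x + y)) • (b / y) = (a + b) / (x + y) := by
    rw [smul_eq_mul, smul_eq_mul, div_add_mul_div hx.ne', add_comm x y, div_add_mul_div hy.ne',
      ← add_div]
  have hlhs : (x + y) * ((a + b) / (x + y) * log ((a + b) / (x + y))) =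
      (a + b) * log ((a + b) / (x + y)) := mul_mul_log_div_self hxy.ne'
  have hrhs : (x + y) * ((x / (x + y)) • (a / x * log (a / x)) +
      (y / (x + y)) • (b / y * log (b / y))) = a * log (a / x) + b * log (b / y) := by
    rw [smul_eq_mul, smul_eq_mul, mul_add, ← mul_assoc (x + y), ← mul_assoc (x + y),
      mul_div_cancel₀ x hxy.ne', mul_div_cancel₀ y hxy.ne', mul_mul_log_div_self hx.ne',
      mul_mul_log_div_self hy.ne']
  have hwx : 0 < x / (x + y) := by positivity
  have hwy : 0 < y / (x + y) := by positivity
  refine ⟨?_, ⟨fun heq => ?_, fun hprop => ?_⟩⟩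
  · have := strictConvexOn_mul_log.convexOn.2 hp hq hwx.le hwy.le hweights
    rw [hmix] at this
    rw [← hlhs, ← hrhs]
    exact mul_le_mul_of_nonneg_left this hxy.le
  · by_contra hne
    have hpq : a / x ≠ b / y := by rwa [ne_eq, div_eq_div_iff hx.ne' hy.ne']
    have := strictConvexOn_mul_log.2 hp hq hpq hwx hwy hweights
    rw [hmix] at this
    rw [← hlhs, ← hrhs] at heq
    exact (mul_lt_mul_of_pos_left this hxy).ne heq
  · have hq : b / y = a / x := by rw [div_eq_div_iff hy.ne' hx.ne']; linarith
    have hmix' : (a + b) / (x + y) = a / x := by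
      rw [div_eq_div_iff hxy.ne' hx.ne']; linarith
    rw [hmix', hq, add_mul]

lemma add_mul_log_div_add_le_and_eq_iff {a b x y : ℝ} (ha : 0 ≤ a) (hb : 0 ≤ b)
    (hax : a ≤ x) (hby : b ≤ y) :
    (a + b) * log ((a + b) / (x + y)) ≤ a * log (a / x) + b * log (b / y) ∧
      ((a + b) * log ((a + b) / (x + y)) = a * log (a / x) + b * log (b / y) ↔
        a * y = b * x) := by
  -- A vanishing denominator forces its numerator to vanish, and then `0 * log (0 / 0) = 0`.
  rcases (ha.trans hax).eq_or_lt with rfl | hx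
  · obtain rfl : a = 0 := le_antisymm hax ha
    simp
  rcases (hb.trans hby).eq_or_lt with rfl | hy
  · obtain rfl : b = 0 := le_antisymm hby hb
    simp
  exact add_mul_log_div_add_le_and_eq_iff_of_pos ha hb hx hy

lemma weighted_add_mul_log_div_le_and_eq_iff {s t a b x y : ℝ} (hs : 0 < s) (ht : 0 < t)
    (ha : 0 ≤ a) (hb : 0 ≤ b) (hax : a ≤ x) (hby : b ≤ y) :
    (s * a + t * b) * log ((s * a + t * b) / (s * x + t * y)) ≤
        s * (a * log (a / x)) + t * (b * log (b / y)) ∧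
      ((s * a + t * b) * log ((s * a + t * b) / (s * x + t * y)) =
          s * (a * log (a / x)) + t * (b * log (b / y)) ↔ y * a = x * b) := by
  have key := add_mul_log_div_add_le_and_eq_iff (mul_nonneg hs.le ha) (mul_nonneg ht.le hb)
    (mul_le_mul_of_nonneg_left hax hs.le) (mul_le_mul_of_nonneg_left hby ht.le)
  rw [mul_div_mul_left _ _ hs.ne', mul_div_mul_left _ _ ht.ne', mul_assoc, mul_assoc] at key
  refine ⟨key.1, key.2.trans ?_⟩
  rw [show s * a * (t * y) = (s * t) * (y * a) by ring,
    show t * b * (s * x) = (s * t) * (x * b) by ring]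
  exact mul_right_inj' (mul_pos hs ht).ne'

lemma Finset.sum_sum_eq_sum_sum_iff_of_le {ι κ M : Type*} [Fintype ι] [Fintype κ]
    [AddCommMonoid M] [PartialOrder M] [IsOrderedCancelAddMonoid M] {f g : ι → κ → M}
    (h : ∀ i j, f i j ≤ g i j) :
    ∑ i, ∑ j, f i j = ∑ i, ∑ j, g i j ↔ ∀ i j, f i j = g i j := by
  rw [sum_eq_sum_iff_of_le fun i _ => sum_le_sum fun j _ => h i j]
  simp only [mem_univ, forall_const, sum_eq_sum_iff_of_le fun j _ => h _ j]

section BlockLaw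

variable {A : Type*} [Fintype A] {n : ℕ}

lemma le_eta {u : (Fin (n + 1) → A) → A → ℝ} (hu : ∀ c a, 0 ≤ u c a) (c : Fin (n + 1) → A)
    (a : A) : u c a ≤ eta u c :=
  single_le_sum (fun b _ => hu c b) (mem_univ a)

lemma eta_weighted_add (u v : (Fin (n + 1) → A) → A → ℝ) (s t : ℝ) (c : Fin (n + 1) → A) :
    eta (fun c a => s * u c a + t * v c a) c = s * eta u c + t * eta v c := by
  simp only [eta, sum_add_distrib, mul_sum]

end BlockLaw

theorem stmt2_general {A : Type*} [Fintype A] {n : ℕ}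
    (u v : (Fin (n + 1) → A) → A → ℝ)
    (hu : IsBlockLaw u) (hv : IsBlockLaw v)
    (t : ℝ) (ht : t ∈ Set.Ioo (0 : ℝ) 1) :
    t * J u + (1 - t) * J v ≤ J (fun c a => t * u c a + (1 - t) * v c a) ∧
      (J (fun c a => t * u c a + (1 - t) * v c a) = t * J u + (1 - t) * J v ↔
        ∀ c a, eta v c * u c a = eta u c * v c a) := by
  have hterm c a := weighted_add_mul_log_div_le_and_eq_iff ht.1 (sub_pos.2 ht.2)
    (hu.1 c a) (hv.1 c a) (le_eta hu.1 c a) (le_eta hv.1 c a)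
  have hJ_mix : J (fun c a => t * u c a + (1 - t) * v c a) =
      -∑ c, ∑ a, (t * u c a + (1 - t) * v c a) *
        log ((t * u c a + (1 - t) * v c a) / (t * eta u c + (1 - t) * eta v c)) := by
    simp only [J, eta_weighted_add]
  have hJ_comb : t * J u + (1 - t) * J v = -∑ c, ∑ a,
      (t * (u c a * log (u c a / eta u c)) + (1 - t) * (v c a * log (v c a / eta v c))) := by
    simp only [J, mul_neg, mul_sum, ← neg_add, ← sum_add_distrib]
  rw [hJ_mix, hJ_comb, neg_le_neg_iff, neg_inj]
  exact ⟨sum_le_sum fun c _ => sum_le_sum fun a _ => (hterm c a).1,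
    (sum_sum_eq_sum_sum_iff_of_le fun c a => (hterm c a).1).trans
      (forall₂_congr fun c a => (hterm c a).2)⟩

/-- Concavity of `J` along segments of block laws, with equality
exactly when the rows of `u` and `v` are proportional in every context. -/
theorem stmt2 {A : Type*} [Fintype A] [Nonempty A] {n : ℕ}
    (u v : (Fin (n + 1) → A) → A → ℝ)
    (hu : IsBlockLaw u) (hv : IsBlockLaw v)
    (t : ℝ) (ht : t ∈ Set.Ioo (0 : ℝ) 1) :
    t * J u + (1 - t) * J v ≤ J (fun c a => t * u c a + (1 - t) * v c a) ∧
      (J (fun c a => t * u c a + (1 - t) * v c a) = t * J u + (1 - t) * J v ↔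
        ∀ c a, eta v c * u c a = eta u c * v c a) :=
  stmt2_general u v hu hv t ht
end

section
/- Let K be a convex set of block laws on A^r × A. Then the following are equivalent: (i) J is strictly concave on K, i.e. J(t·u + (1−t)·v) > t·J(u) + (1−t)·J(v) for all distinct u, v ∈ K and all t ∈ (0,1); (ii) for every distinct pair u, v ∈ K there exist a context c ∈ A^r and a symbol a ∈ A such that η_v(c)·u(c,a) ≠ η_u(c)·v(c,a). -/
open Finset

lemma philog_eq {t p q P Q : ℝ} (ht0 : 0 < t) (ht1 : t < 1)
    (hp : 0 ≤ p) (hpP : p ≤ P) (hq : 0 ≤ q) (hqQ : q ≤ Q)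
    (h : p * Q = q * P) :
    (t*p+(1-t)*q) * Real.log ((t*p+(1-t)*q)/(t*P+(1-t)*Q))
      = t*(p*Real.log (p/P)) + (1-t)*(q*Real.log (q/Q)) := by
  have hP0 : 0 ≤ P := hp.trans hpP
  have hQ0 : 0 ≤ Q := hq.trans hqQ
  have h1t : (0:ℝ) < 1 - t := by linarith
  rcases eq_or_lt_of_le hP0 with hP | hP
  · have hp0 : p = 0 := le_antisymm (hpP.trans_eq hP.symm) hp
    subst hp0
    rcases eq_or_lt_of_le hQ0 with hQ | hQ
    · have hq0 : q = 0 := le_antisymm (hqQ.trans_eq hQ.symm) hq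
      subst hq0; simp
    · rw [← hP]
      simp only [mul_zero, zero_add]
      rw [mul_div_mul_left q Q h1t.ne']
      simp
      ring
  · rcases eq_or_lt_of_le hQ0 with hQ | hQ
    · have hq0 : q = 0 := le_antisymm (hqQ.trans_eq hQ.symm) hq
      subst hq0
      rw [← hQ]
      simp only [mul_zero, add_zero]
      rw [mul_div_mul_left p P ht0.ne']
      simp
      ring
    · obtain ⟨s, hsP, hsQ⟩ : ∃ s, p = s * P ∧ q = s * Q :=
        ⟨p / P, by field_simp, by rw [div_mul_eq_mul_div, eq_div_iff hP.ne']; linarith⟩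
      subst hsP; subst hsQ
      have hW : 0 < t*P+(1-t)*Q := by positivity
      have e1 : t*(s*P)+(1-t)*(s*Q) = s*(t*P+(1-t)*Q) := by ring
      rw [e1, mul_div_assoc, div_self hW.ne', mul_one,
        mul_div_assoc, div_self hP.ne', mul_one,
        mul_div_assoc, div_self hQ.ne', mul_one]
      ring

lemma philog_lt {t p q P Q : ℝ} (ht0 : 0 < t) (ht1 : t < 1)
    (hp : 0 ≤ p) (hpP : p ≤ P) (hq : 0 ≤ q) (hqQ : q ≤ Q)
    (h : p * Q ≠ q * P) :
    (t*p+(1-t)*q) * Real.log ((t*p+(1-t)*q)/(t*P+(1-t)*Q))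
      < t*(p*Real.log (p/P)) + (1-t)*(q*Real.log (q/Q)) := by
  have h1t : (0:ℝ) < 1 - t := by linarith
  have hP : 0 < P := by
    rcases eq_or_lt_of_le (hp.trans hpP) with hP | hP
    · exact absurd (by rw [← hP] at hpP ⊢; have : p = 0 := le_antisymm hpP hp; simp [this]) h
    · exact hP
  have hQ : 0 < Q := by
    rcases eq_or_lt_of_le (hq.trans hqQ) with hQ | hQ
    · exact absurd (by rw [← hQ] at hqQ ⊢; have : q = 0 := le_antisymm hqQ hq; simp [this]) h
    · exact hQ
  have hW : 0 < t*P+(1-t)*Q := by positivity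
  have hxy : p / P ≠ q / Q := fun he => h ((div_eq_div_iff hP.ne' hQ.ne').1 he)
  have ha : 0 < t*P/(t*P+(1-t)*Q) := by positivity
  have hb : 0 < (1-t)*Q/(t*P+(1-t)*Q) := by positivity
  have hab : t*P/(t*P+(1-t)*Q) + (1-t)*Q/(t*P+(1-t)*Q) = 1 := by
    field_simp
  have hconv := Real.strictConvexOn_mul_log.2 (Set.mem_Ici.2 (div_nonneg hp hP.le))
    (Set.mem_Ici.2 (div_nonneg hq hQ.le)) hxy ha hb hab
  simp only [smul_eq_mul] at hconv
  have hcomb : t*P/(t*P+(1-t)*Q) * (p/P) + (1-t)*Q/(t*P+(1-t)*Q) * (q/Q)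
      = (t*p+(1-t)*q)/(t*P+(1-t)*Q) := by
    field_simp
  rw [hcomb] at hconv
  have := mul_lt_mul_of_pos_left hconv hW
  set L := Real.log ((t*p+(1-t)*q)/(t*P+(1-t)*Q)) with hL
  set L1 := Real.log (p/P)
  set L2 := Real.log (q/Q)
  calc (t*p+(1-t)*q) * L
      = (t*P+(1-t)*Q) * ((t*p+(1-t)*q)/(t*P+(1-t)*Q) * L) := by
        rw [← mul_assoc, mul_div_cancel₀ _ hW.ne']
    _ < (t*P+(1-t)*Q) * (t*P/(t*P+(1-t)*Q) * (p/P * L1) + (1-t)*Q/(t*P+(1-t)*Q) * (q/Q * L2)) := this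
    _ = t*(p*L1) + (1-t)*(q*L2) := by field_simp

lemma philog_le {t p q P Q : ℝ} (ht0 : 0 < t) (ht1 : t < 1)
    (hp : 0 ≤ p) (hpP : p ≤ P) (hq : 0 ≤ q) (hqQ : q ≤ Q) :
    (t*p+(1-t)*q) * Real.log ((t*p+(1-t)*q)/(t*P+(1-t)*Q))
      ≤ t*(p*Real.log (p/P)) + (1-t)*(q*Real.log (q/Q)) := by
  by_cases h : p * Q = q * P
  · exact (philog_eq ht0 ht1 hp hpP hq hqQ h).le
  · exact (philog_lt ht0 ht1 hp hpP hq hqQ h).le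

/-- On a convex set `K` of block laws, strict concavity of `J` is
equivalent to the absence of distinct rowwise-proportional pairs in `K`. -/
theorem stmt3 {A : Type*} [Fintype A] [Nonempty A] {n : ℕ}
    (K : Set ((Fin (n + 1) → A) → A → ℝ)) (hK : Convex ℝ K)
    (hbl : ∀ u ∈ K, IsBlockLaw u) :
    (∀ u ∈ K, ∀ v ∈ K, u ≠ v → ∀ t ∈ Set.Ioo (0 : ℝ) 1,
        t * J u + (1 - t) * J v < J (t • u + (1 - t) • v)) ↔
      (∀ u ∈ K, ∀ v ∈ K, u ≠ v →
        ∃ c a, eta v c * u c a ≠ eta u c * v c a) := by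
  have heta : ∀ (u v : (Fin (n+1) → A) → A → ℝ) (t : ℝ) c,
      eta (t • u + (1 - t) • v) c = t * eta u c + (1 - t) * eta v c := by
    intro u v t c
    simp [eta, Finset.mul_sum, Finset.sum_add_distrib]
  have hJw : ∀ (u v : (Fin (n+1) → A) → A → ℝ) (t : ℝ),
      J (t • u + (1 - t) • v)
        = -∑ c, ∑ a, (t * u c a + (1 - t) * v c a) *
            Real.log ((t * u c a + (1 - t) * v c a) / (t * eta u c + (1 - t) * eta v c)) := by
    intro u v t
    simp only [J]
    congr 1
    refine Finset.sum_congr rfl fun c _ => Finset.sum_congr rfl fun a _ => ?_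
    rw [heta]
    simp [Pi.add_apply, Pi.smul_apply, smul_eq_mul]
  have hJsplit : ∀ (u v : (Fin (n+1) → A) → A → ℝ) (t : ℝ),
      t * J u + (1 - t) * J v
        = -∑ c, ∑ a, (t * (u c a * Real.log (u c a / eta u c))
            + (1 - t) * (v c a * Real.log (v c a / eta v c))) := by
    intro u v t
    have h1 : ∑ c, ∑ a, (t * (u c a * Real.log (u c a / eta u c))
          + (1 - t) * (v c a * Real.log (v c a / eta v c)))
        = t * ∑ c, ∑ a, (u c a * Real.log (u c a / eta u c))
          + (1 - t) * ∑ c, ∑ a, (v c a * Real.log (v c a / eta v c)) := by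
      rw [Finset.mul_sum, Finset.mul_sum, ← Finset.sum_add_distrib]
      refine Finset.sum_congr rfl fun c _ => ?_
      rw [Finset.mul_sum, Finset.mul_sum, ← Finset.sum_add_distrib]
    rw [h1]
    simp only [J]
    ring
  constructor
  · intro hstrict u hu v hv huv
    by_contra hno
    push_neg at hno
    have hbu := hbl u hu
    have hbv := hbl v hv
    have hleu : ∀ c a, u c a ≤ eta u c := fun c a =>
      Finset.single_le_sum (fun i _ => hbu.1 c i) (Finset.mem_univ a)
    have hlev : ∀ c a, v c a ≤ eta v c := fun c a =>
      Finset.single_le_sum (fun i _ => hbv.1 c i) (Finset.mem_univ a)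
    have heqg : ∀ t : ℝ, 0 < t → t < 1 →
        J (t • u + (1 - t) • v) = t * J u + (1 - t) * J v := by
      intro t ht0 ht1
      rw [hJw u v t, hJsplit u v t]
      congr 1
      refine Finset.sum_congr rfl fun c _ => Finset.sum_congr rfl fun a _ => ?_
      exact philog_eq ht0 ht1 (hbu.1 c a) (hleu c a)
        (hbv.1 c a) (hlev c a) (by rw [mul_comm, mul_comm (v c a)]; exact hno c a)
    have hlt := hstrict u hu v hv huv (1/2) ⟨by norm_num, by norm_num⟩
    rw [heqg (1/2) (by norm_num) (by norm_num)] at hlt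
    exact lt_irrefl _ hlt
  · intro hprop u hu v hv huv t ht
    obtain ⟨c₀, a₀, hne⟩ := hprop u hu v hv huv
    have hbu := hbl u hu
    have hbv := hbl v hv
    have hleu : ∀ c a, u c a ≤ eta u c := fun c a =>
      Finset.single_le_sum (fun i _ => hbu.1 c i) (Finset.mem_univ a)
    have hlev : ∀ c a, v c a ≤ eta v c := fun c a =>
      Finset.single_le_sum (fun i _ => hbv.1 c i) (Finset.mem_univ a)
    rw [hJw, hJsplit]
    apply neg_lt_neg
    apply Finset.sum_lt_sum
    · intro c _
      exact Finset.sum_le_sum fun a _ =>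
        philog_le ht.1 ht.2 (hbu.1 c a) (hleu c a) (hbv.1 c a) (hlev c a)
    · refine ⟨c₀, Finset.mem_univ c₀, ?_⟩
      apply Finset.sum_lt_sum
      · intro a _
        exact philog_le ht.1 ht.2 (hbu.1 c₀ a) (hleu c₀ a) (hbv.1 c₀ a) (hlev c₀ a)
      · refine ⟨a₀, Finset.mem_univ a₀, ?_⟩
        exact philog_lt ht.1 ht.2 (hbu.1 c₀ a₀) (hleu c₀ a₀) (hbv.1 c₀ a₀) (hlev c₀ a₀)
          (fun hh => hne (by rw [mul_comm (eta v c₀), mul_comm (eta u c₀)]; exact hh))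
end

section
/- Suppose the feasible class U is nonempty, that there is a fixed set S ⊆ A^r × A such that every u ∈ U satisfies u(c,a) > 0 if and only if (c,a) ∈ S (a common positive-support face), and that for every distinct pair u, v ∈ U there exists a context c ∈ A^r with η_u(c) > 0 such that the conditional rows differ, i.e. u(c,a)/η_u(c) ≠ v(c,a)/η_v(c) for some a ∈ A. Then the entropy-rate functional J has a unique maximizer on U. -/
open Finset

section Aux

lemma key_le {x1 x2 y1 y2 : ℝ} (hx1 : 0 ≤ x1) (hx2 : 0 ≤ x2)
    (hy1 : 0 < y1) (hy2 : 0 < y2) :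
    (x1 + x2) * Real.log ((x1 + x2) / (y1 + y2)) ≤
      x1 * Real.log (x1 / y1) + x2 * Real.log (x2 / y2) := by
  have hs : 0 < y1 + y2 := by linarith
  have h := Real.convexOn_mul_log.2 (Set.mem_Ici.2 (div_nonneg hx1 hy1.le))
    (Set.mem_Ici.2 (div_nonneg hx2 hy2.le))
    (le_of_lt (by positivity : (0:ℝ) < y1 / (y1 + y2)))
    (le_of_lt (by positivity : (0:ℝ) < y2 / (y1 + y2)))
    (by field_simp)
  simp only [smul_eq_mul] at h
  have hcombo : y1 / (y1 + y2) * (x1 / y1) + y2 / (y1 + y2) * (x2 / y2)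
      = (x1 + x2) / (y1 + y2) := by field_simp
  rw [hcombo] at h
  have h2 := mul_le_mul_of_nonneg_left h hs.le
  set L := Real.log ((x1 + x2) / (y1 + y2)) with hL
  set L1 := Real.log (x1 / y1) with hL1
  set L2 := Real.log (x2 / y2) with hL2
  have e0 : (y1 + y2) * ((x1 + x2) / (y1 + y2) * L) = (x1 + x2) * L := by
    field_simp
  have e1 : (y1 + y2) * (y1 / (y1 + y2) * (x1 / y1 * L1) + y2 / (y1 + y2) * (x2 / y2 * L2))
      = x1 * L1 + x2 * L2 := by field_simp
  rw [e0, e1] at h2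
  exact h2

lemma key_lt {x1 x2 y1 y2 : ℝ} (hx1 : 0 ≤ x1) (hx2 : 0 ≤ x2)
    (hy1 : 0 < y1) (hy2 : 0 < y2) (hne : x1 / y1 ≠ x2 / y2) :
    (x1 + x2) * Real.log ((x1 + x2) / (y1 + y2)) <
      x1 * Real.log (x1 / y1) + x2 * Real.log (x2 / y2) := by
  have hs : 0 < y1 + y2 := by linarith
  have h := Real.strictConvexOn_mul_log.2 (Set.mem_Ici.2 (div_nonneg hx1 hy1.le))
    (Set.mem_Ici.2 (div_nonneg hx2 hy2.le)) hne
    (by positivity : (0:ℝ) < y1 / (y1 + y2))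
    (by positivity : (0:ℝ) < y2 / (y1 + y2))
    (by field_simp)
  simp only [smul_eq_mul] at h
  have hcombo : y1 / (y1 + y2) * (x1 / y1) + y2 / (y1 + y2) * (x2 / y2)
      = (x1 + x2) / (y1 + y2) := by field_simp
  rw [hcombo] at h
  have h2 := mul_lt_mul_of_pos_left h hs
  set L := Real.log ((x1 + x2) / (y1 + y2)) with hL
  set L1 := Real.log (x1 / y1) with hL1
  set L2 := Real.log (x2 / y2) with hL2
  have e0 : (y1 + y2) * ((x1 + x2) / (y1 + y2) * L) = (x1 + x2) * L := by
    field_simp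
  have e1 : (y1 + y2) * (y1 / (y1 + y2) * (x1 / y1 * L1) + y2 / (y1 + y2) * (x2 / y2 * L2))
      = x1 * L1 + x2 * L2 := by field_simp
  rw [e0, e1] at h2
  exact h2

lemma term_le {x1 x2 y1 y2 : ℝ} (hx1 : 0 ≤ x1) (hx2 : 0 ≤ x2)
    (hy1 : 0 < y1) (hy2 : 0 < y2) :
    ((x1 + x2) / 2) * Real.log (((x1 + x2) / 2) / ((y1 + y2) / 2)) ≤
      (x1 * Real.log (x1 / y1) + x2 * Real.log (x2 / y2)) / 2 := by
  have hs : (y1 + y2) ≠ 0 := by positivity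
  have harg : ((x1 + x2) / 2) / ((y1 + y2) / 2) = (x1 + x2) / (y1 + y2) := by
    field_simp
  rw [harg]
  have := key_le hx1 hx2 hy1 hy2
  linarith

lemma term_lt {x1 x2 y1 y2 : ℝ} (hx1 : 0 ≤ x1) (hx2 : 0 ≤ x2)
    (hy1 : 0 < y1) (hy2 : 0 < y2) (hne : x1 / y1 ≠ x2 / y2) :
    ((x1 + x2) / 2) * Real.log (((x1 + x2) / 2) / ((y1 + y2) / 2)) <
      (x1 * Real.log (x1 / y1) + x2 * Real.log (x2 / y2)) / 2 := by
  have hs : (y1 + y2) ≠ 0 := by positivity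
  have harg : ((x1 + x2) / 2) / ((y1 + y2) / 2) = (x1 + x2) / (y1 + y2) := by
    field_simp
  rw [harg]
  have := key_lt hx1 hx2 hy1 hy2 hne
  linarith

lemma row_le {A : Type*} [Fintype A] (p q : A → ℝ)
    (hp : ∀ a, 0 ≤ p a) (hq : ∀ a, 0 ≤ q a)
    (hsupp : ∀ a, p a = 0 ↔ q a = 0) :
    ∑ a, ((p a + q a) / 2) * Real.log (((p a + q a) / 2) / (∑ b, (p b + q b) / 2)) ≤
      (∑ a, p a * Real.log (p a / ∑ b, p b) + ∑ a, q a * Real.log (q a / ∑ b, q b)) / 2 := by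
  have hden : ∑ b, (p b + q b) / 2 = ((∑ b, p b) + ∑ b, q b) / 2 := by
    rw [← Finset.sum_div, Finset.sum_add_distrib]
  rcases eq_or_lt_of_le (Finset.sum_nonneg fun b _ => hp b) with hP | hP
  · have hpz : ∀ a, p a = 0 := fun a =>
      (Finset.sum_eq_zero_iff_of_nonneg (fun b _ => hp b)).1 hP.symm a (mem_univ a)
    have hqz : ∀ a, q a = 0 := fun a => (hsupp a).1 (hpz a)
    simp [hpz, hqz]
  · have hQ : 0 < ∑ b, q b := by
      obtain ⟨a0, -, ha0⟩ := Finset.exists_lt_of_sum_lt (f := fun _ : A => (0:ℝ))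
        (by simpa using hP)
      have hq0 : 0 < q a0 := by
        rcases lt_or_eq_of_le (hq a0) with h | h
        · exact h
        · exact absurd ((hsupp a0).2 h.symm) (by linarith)
      exact lt_of_lt_of_le hq0 (Finset.single_le_sum (fun b _ => hq b) (mem_univ a0))
    rw [hden]
    calc ∑ a, ((p a + q a) / 2) *
          Real.log (((p a + q a) / 2) / (((∑ b, p b) + ∑ b, q b) / 2))
        ≤ ∑ a, (p a * Real.log (p a / ∑ b, p b) + q a * Real.log (q a / ∑ b, q b)) / 2 :=
          Finset.sum_le_sum fun a _ => term_le (hp a) (hq a) hP hQ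
      _ = _ := by rw [← Finset.sum_div, Finset.sum_add_distrib]

lemma row_lt {A : Type*} [Fintype A] (p q : A → ℝ)
    (hp : ∀ a, 0 ≤ p a) (hq : ∀ a, 0 ≤ q a)
    (hsupp : ∀ a, p a = 0 ↔ q a = 0)
    (hP : 0 < ∑ b, p b)
    (hne : ∃ a, p a / ∑ b, p b ≠ q a / ∑ b, q b) :
    ∑ a, ((p a + q a) / 2) * Real.log (((p a + q a) / 2) / (∑ b, (p b + q b) / 2)) <
      (∑ a, p a * Real.log (p a / ∑ b, p b) + ∑ a, q a * Real.log (q a / ∑ b, q b)) / 2 := by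
  have hden : ∑ b, (p b + q b) / 2 = ((∑ b, p b) + ∑ b, q b) / 2 := by
    rw [← Finset.sum_div, Finset.sum_add_distrib]
  have hQ : 0 < ∑ b, q b := by
    obtain ⟨a0, -, ha0⟩ := Finset.exists_lt_of_sum_lt (f := fun _ : A => (0:ℝ))
      (by simpa using hP)
    have hq0 : 0 < q a0 := by
      rcases lt_or_eq_of_le (hq a0) with h | h
      · exact h
      · exact absurd ((hsupp a0).2 h.symm) (by linarith)
    exact lt_of_lt_of_le hq0 (Finset.single_le_sum (fun b _ => hq b) (mem_univ a0))
  obtain ⟨a1, ha1⟩ := hne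
  rw [hden]
  calc ∑ a, ((p a + q a) / 2) *
        Real.log (((p a + q a) / 2) / (((∑ b, p b) + ∑ b, q b) / 2))
      < ∑ a, (p a * Real.log (p a / ∑ b, p b) + q a * Real.log (q a / ∑ b, q b)) / 2 :=
        Finset.sum_lt_sum (fun a _ => term_le (hp a) (hq a) hP hQ)
          ⟨a1, mem_univ a1, term_lt (hp a1) (hq a1) hP hQ ha1⟩
    _ = _ := by rw [← Finset.sum_div, Finset.sum_add_distrib]

end Aux


/-- Common positive-support face plus kernel separation imply a
unique maximizer of `J` on the feasible class. -/
theorem stmt5 {A : Type*} [Fintype A] [Nonempty A] {n m : ℕ}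
    (G : Fin m → (Fin (n + 1) → A) → A → ℝ) (b : Fin m → ℝ)
    (hne : ∃ u, Feasible G b u)
    (S : Set ((Fin (n + 1) → A) × A))
    (hsupp : ∀ u, Feasible G b u → ∀ c a, 0 < u c a ↔ (c, a) ∈ S)
    (hsep : ∀ u v, Feasible G b u → Feasible G b v → u ≠ v →
      ∃ c, 0 < eta u c ∧ ∃ a, u c a / eta u c ≠ v c a / eta v c) :
    ∃! ustar, Feasible G b ustar ∧ ∀ u, Feasible G b u → J u ≤ J ustar := by
  classical
  set U : Set ((Fin (n + 1) → A) → A → ℝ) := {u | Feasible G b u} with hUdef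
  have hev : ∀ (c : Fin (n + 1) → A) (a : A),
      Continuous fun u : (Fin (n + 1) → A) → A → ℝ => u c a :=
    fun c a => (continuous_apply a).comp (continuous_apply c)
  have heta : ∀ c, Continuous fun u : (Fin (n + 1) → A) → A → ℝ => eta u c := by
    intro c
    unfold eta
    exact continuous_finset_sum _ fun a _ => hev c a
  -- support facts
  have hzeroU : ∀ u ∈ U, ∀ c a, (c, a) ∉ S → u c a = 0 := by
    intro u hu c a hS
    have h1 := (hsupp u hu c a).not
    have h2 := hu.1.1 c a
    rcases lt_or_eq_of_le h2 with h | h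
    · exact absurd ((hsupp u hu c a).1 h) hS
    · exact h.symm
  have hposU : ∀ u ∈ U, ∀ c a, (c, a) ∈ S → 0 < u c a :=
    fun u hu c a hS => (hsupp u hu c a).2 hS
  -- continuity of J on U
  have hcont : ContinuousOn J U := by
    unfold J
    apply ContinuousOn.neg
    apply continuousOn_finset_sum
    intro c _
    apply continuousOn_finset_sum
    intro a _
    by_cases hS : (c, a) ∈ S
    · intro w hw
      apply ContinuousAt.continuousWithinAt
      have h1 : 0 < w c a := hposU w hw c a hS
      have h2 : 0 < eta w c :=
        lt_of_lt_of_le h1 (Finset.single_le_sum (fun i _ => hw.1.1 c i) (mem_univ a))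
      have hd : ContinuousAt (fun u : (Fin (n + 1) → A) → A → ℝ => u c a / eta u c) w :=
        ((hev c a).continuousAt).div ((heta c).continuousAt) h2.ne'
      have hlog : ContinuousAt
          (fun u : (Fin (n + 1) → A) → A → ℝ => Real.log (u c a / eta u c)) w :=
        (Real.continuousAt_log (by positivity)).comp hd
      exact ((hev c a).continuousAt).mul hlog
    · have heq : Set.EqOn (fun u : (Fin (n + 1) → A) → A → ℝ =>
          u c a * Real.log (u c a / eta u c)) (fun _ => 0) U := by
        intro w hw
        simp [hzeroU w hw c a hS]
      exact continuousOn_const.congr heq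
  -- compactness of U
  have hclosed : IsClosed U := by
    have hrep : U = (⋂ c, ⋂ a, {u : (Fin (n + 1) → A) → A → ℝ | 0 ≤ u c a}) ∩
        ({u | ∑ c, ∑ a, u c a = 1} ∩
          ((⋂ d, {u | ∑ α : A, u (shiftCtx α d) (d (Fin.last n)) = ∑ β : A, u d β}) ∩
            ⋂ j, {u | ∑ c, ∑ a, u c a * G j c a = b j})) := by
      ext u
      simp only [hUdef, Set.mem_setOf_eq, Set.mem_inter_iff, Set.mem_iInter,
        Feasible, IsBlockLaw, StationaryConsistent]
      tauto
    rw [hrep]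
    refine IsClosed.inter ?_ (IsClosed.inter ?_ (IsClosed.inter ?_ ?_))
    · exact isClosed_iInter fun c => isClosed_iInter fun a =>
        isClosed_le continuous_const (hev c a)
    · exact isClosed_eq
        (continuous_finset_sum _ fun c _ => continuous_finset_sum _ fun a _ => hev c a)
        continuous_const
    · exact isClosed_iInter fun d => isClosed_eq
        (continuous_finset_sum _ fun α _ => hev _ _)
        (continuous_finset_sum _ fun β _ => hev _ _)
    · exact isClosed_iInter fun j => isClosed_eq
        (continuous_finset_sum _ fun c _ => continuous_finset_sum _ fun a _ =>
          (hev c a).mul continuous_const)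
        continuous_const
  have hsub : U ⊆ Set.Icc (0 : (Fin (n + 1) → A) → A → ℝ) 1 := by
    intro u hu
    constructor
    · intro c a
      exact hu.1.1 c a
    · intro c a
      have h1 : u c a ≤ ∑ i, u c i :=
        Finset.single_le_sum (fun i _ => hu.1.1 c i) (mem_univ a)
      have h2 : (∑ i, u c i) ≤ ∑ d, ∑ i, u d i :=
        Finset.single_le_sum (f := fun d => ∑ i, u d i)
          (fun d _ => Finset.sum_nonneg fun i _ => hu.1.1 d i) (mem_univ c)
      have h3 := hu.1.2
      calc u c a ≤ ∑ d, ∑ i, u d i := le_trans h1 h2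
        _ = 1 := h3
  have hK : IsCompact U := IsCompact.of_isClosed_subset isCompact_Icc hclosed hsub
  obtain ⟨u0, hu0⟩ := hne
  obtain ⟨ustar, hust, hmax⟩ := hK.exists_isMaxOn ⟨u0, hu0⟩ hcont
  refine ⟨ustar, ⟨hust, fun u hu => hmax hu⟩, ?_⟩
  rintro y ⟨hy, hymax⟩
  by_contra hne'
  -- two distinct maximizers y and ustar
  have hJeq : J y = J ustar := le_antisymm (hmax hy) (hymax ustar hust)
  obtain ⟨c0, hc0pos, a0, ha0⟩ := hsep y ustar hy hust hne'
  -- midpoint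
  set w : (Fin (n + 1) → A) → A → ℝ := fun c a => (y c a + ustar c a) / 2 with hwdef
  have hsupp_yu : ∀ c a, y c a = 0 ↔ ustar c a = 0 := by
    intro c a
    constructor <;> intro h
    · by_contra h'
      have hpos : 0 < ustar c a := lt_of_le_of_ne (hust.1.1 c a) (Ne.symm h')
      have := ((hsupp y hy c a).2 ((hsupp ustar hust c a).1 hpos))
      linarith [this, h.le]
    · by_contra h'
      have hpos : 0 < y c a := lt_of_le_of_ne (hy.1.1 c a) (Ne.symm h')
      have := ((hsupp ustar hust c a).2 ((hsupp y hy c a).1 hpos))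
      linarith [this, h.le]
  have hwfeas : Feasible G b w := by
    have hsum2 : ∀ f g : (Fin (n + 1) → A) → A → ℝ,
        ∑ c, ∑ a, (f c a + g c a) / 2 = ((∑ c, ∑ a, f c a) + ∑ c, ∑ a, g c a) / 2 := by
      intro f g
      simp only [← Finset.sum_div, Finset.sum_add_distrib]
    refine ⟨⟨fun c a => div_nonneg (add_nonneg (hy.1.1 c a) (hust.1.1 c a)) (by norm_num),
        ?_⟩, ?_, ?_⟩
    · show ∑ c, ∑ a, (y c a + ustar c a) / 2 = 1
      rw [hsum2, hy.1.2, hust.1.2]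
      norm_num
    · intro d
      show ∑ α : A, (y (shiftCtx α d) (d (Fin.last n)) + ustar (shiftCtx α d) (d (Fin.last n))) / 2
          = ∑ β : A, (y d β + ustar d β) / 2
      simp only [← Finset.sum_div, Finset.sum_add_distrib]
      rw [hy.2.1 d, hust.2.1 d]
    · intro j
      have hrw : ∀ c a, w c a * G j c a = (y c a * G j c a + ustar c a * G j c a) / 2 := by
        intro c a
        show (y c a + ustar c a) / 2 * G j c a = _
        ring
      calc ∑ c, ∑ a, w c a * G j c a
          = ∑ c, ∑ a, (y c a * G j c a + ustar c a * G j c a) / 2 := by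
            exact Finset.sum_congr rfl fun c _ => Finset.sum_congr rfl fun a _ => hrw c a
        _ = ((∑ c, ∑ a, y c a * G j c a) + ∑ c, ∑ a, ustar c a * G j c a) / 2 :=
            hsum2 _ _
        _ = b j := by rw [hy.2.2 j, hust.2.2 j]; ring
  -- strict concavity step
  have hlt : ∑ c, ∑ a, w c a * Real.log (w c a / eta w c)
      < ((∑ c, ∑ a, y c a * Real.log (y c a / eta y c))
          + ∑ c, ∑ a, ustar c a * Real.log (ustar c a / eta ustar c)) / 2 := by
    calc ∑ c, ∑ a, w c a * Real.log (w c a / eta w c)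
        < ∑ c, ((∑ a, y c a * Real.log (y c a / eta y c))
            + ∑ a, ustar c a * Real.log (ustar c a / eta ustar c)) / 2 := by
          refine Finset.sum_lt_sum (fun c _ => ?_) ⟨c0, mem_univ c0, ?_⟩
          · exact row_le (y c) (ustar c) (hy.1.1 c) (hust.1.1 c) (hsupp_yu c)
          · exact row_lt (y c0) (ustar c0) (hy.1.1 c0) (hust.1.1 c0) (hsupp_yu c0)
              hc0pos ⟨a0, ha0⟩
      _ = _ := by simp only [← Finset.sum_div, Finset.sum_add_distrib]
  have ew : J w = -(∑ c, ∑ a, w c a * Real.log (w c a / eta w c)) := rfl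
  have ey : J y = -(∑ c, ∑ a, y c a * Real.log (y c a / eta y c)) := rfl
  have eu : J ustar = -(∑ c, ∑ a, ustar c a * Real.log (ustar c a / eta ustar c)) := rfl
  have hJw := hymax w hwfeas
  rw [ey, eu] at hJeq
  rw [ew, ey] at hJw
  linarith
end

section
/- Let u* ∈ U with support S := {(c,a) : u*(c,a) > 0}, and suppose u* maximizes J over the face {u ∈ U : u(c,a) = 0 for all (c,a) ∉ S}. For a block (c,a) with c = (c₁,…,c_r) write σ(c,a) := (c₂,…,c_r,a) ∈ A^r for its length-r suffix. Then there exist multipliers λ₁,…,λ_m ∈ ℝ, a scalar γ ∈ ℝ, and a function ψ : A^r → ℝ such that for every (c,a) ∈ S: log( u*(c,a) / η_{u*}(c) ) = −γ − ∑_{j=1}^m λ_j·G_j(c,a) − ψ(c) + ψ(σ(c,a)). -/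
open Finset

open Topology

/-!
Let `v` be a direction supported on `S` that preserves the linear constraints: total mass, the
feature moments and stationary consistency. For small `|t|` the law `u* + t v` stays in the face,
so `t ↦ J(u* + t v)` has a local maximum at `0`. Its derivative there is
`-∑ v log(u*/η_{u*})`, because the contributions of the varying normalisation `η` cancel. Hence
`log(u*/η_{u*})` annihilates every such `v`, and by finite-dimensional duality it agrees on `S`
with a linear combination of the constraint tables. The coefficients of the mass, feature and
stationarity constraints give `-γ`, `-λ_j` and `ψ`.
-/

theorem exists_sum_smul_eq_of_dotProduct_eq_zero {X ι : Type*} [Fintype X] [Fintype ι]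
    (f : ι → X → ℝ) (w : X → ℝ)
    (h : ∀ v, (∀ i, f i ⬝ᵥ v = 0) → w ⬝ᵥ v = 0) :
    ∃ coef : ι → ℝ, ∑ i, coef i • f i = w := by
  classical
  set e := dotProductEquiv ℝ X
  have hker : ⨅ i, LinearMap.ker (e (f i)) ≤ LinearMap.ker (e w) := fun v hv => by
    simp only [Submodule.mem_iInf, LinearMap.mem_ker, e, dotProductEquiv_apply_apply] at hv ⊢
    exact h v hv
  obtain ⟨coef, hcoef⟩ :=
    (Submodule.mem_span_range_iff_exists_fun ℝ).1 (mem_span_of_iInf_ker_le_ker hker)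
  exact ⟨coef, e.injective (by simpa [map_sum] using hcoef)⟩

theorem exists_eq_sum_mul_on_of_dotProduct_eq_zero {X ι : Type*} [Fintype X] [Fintype ι]
    (f : ι → X → ℝ) (w : X → ℝ) (S : Set X)
    (h : ∀ v, (∀ x ∉ S, v x = 0) → (∀ i, f i ⬝ᵥ v = 0) → w ⬝ᵥ v = 0) :
    ∃ coef : ι → ℝ, ∀ x ∈ S, w x = ∑ i, coef i * f i x := by
  classical
  let f' : ι ⊕ {x // x ∉ S} → X → ℝ := Sum.elim f fun y => Pi.single y.1 1
  obtain ⟨coef, hcoef⟩ := exists_sum_smul_eq_of_dotProduct_eq_zero f' w fun v hv =>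
    h v (fun x hx => by simpa [f'] using hv (.inr ⟨x, hx⟩)) fun i => hv (.inl i)
  refine ⟨fun i => coef (.inl i), fun x hx => ?_⟩
  have hS : ∀ y : {x // x ∉ S}, (Pi.single y.1 1 : X → ℝ) x = 0 := fun y =>
    Pi.single_eq_of_ne (ne_of_mem_of_not_mem hx y.2) _
  simp [← hcoef, Fintype.sum_sum_type, f', hS]

theorem hasDerivAt_mul_log_div_of_pos {x y v w : ℝ} (hx : 0 < x) (hy : 0 < y) :
    HasDerivAt (fun t => (x + t * v) * Real.log ((x + t * v) / (y + t * w)))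
      (v * Real.log (x / y) + v - x * w / y) 0 := by
  have hline : ∀ z d : ℝ, HasDerivAt (fun t => z + t * d) d 0 := fun z d => by
    simpa using ((hasDerivAt_id (0 : ℝ)).mul_const d).const_add z
  have hquot := (hline x v).fun_div (hline y w) (by simpa using hy.ne')
  have hlog := hquot.log (by simp only [zero_mul, add_zero]; positivity)
  refine ((hline x v).fun_mul hlog).congr_deriv ?_
  simp only [zero_mul, add_zero]
  field_simp
  ring

theorem hasDerivAt_sum_mul_log_div_sum {A : Type*} [Fintype A] {p q : A → ℝ}
    (hp : ∀ a, 0 ≤ p a) (hq : ∀ a, p a = 0 → q a = 0) :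
    HasDerivAt
      (fun t => ∑ a, (p a + t * q a) * Real.log ((p a + t * q a) / ∑ b, (p b + t * q b)))
      (∑ a, q a * Real.log (p a / ∑ b, p b)) 0 := by
  set P := ∑ b, p b
  set Q := ∑ b, q b
  have hsum : ∀ t : ℝ, ∑ b, (p b + t * q b) = P + t * Q := fun t => by
    rw [sum_add_distrib, mul_sum]
  simp only [hsum]
  have hterm : ∀ a,
      HasDerivAt (fun t => (p a + t * q a) * Real.log ((p a + t * q a) / (P + t * Q)))
      (q a * Real.log (p a / P) + q a - p a * Q / P) 0 := fun a => by
    rcases (hp a).eq_or_lt with hpa | hpa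
    · simp only [← hpa, hq a hpa.symm]
      simpa using hasDerivAt_const (0 : ℝ) (0 : ℝ)
    · exact hasDerivAt_mul_log_div_of_pos hpa
        (hpa.trans_le (single_le_sum (fun b _ => hp b) (mem_univ a)))
  refine (HasDerivAt.fun_sum fun a _ => hterm a).congr_deriv ?_
  rw [sum_sub_distrib, sum_add_distrib, ← sum_div, ← sum_mul]
  rcases eq_or_ne P 0 with hP | hP
  · have hp0 : ∀ a, p a = 0 := fun a =>
      (sum_eq_zero_iff_of_nonneg fun b _ => hp b).1 hP a (mem_univ a)
    simp [Q, hp0, hq _ (hp0 _)]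
  · rw [mul_div_cancel_left₀ _ hP]
    ring

theorem sum_sum_ite_snoc_tail_mul {A : Type*} [Fintype A] [DecidableEq A] {n : ℕ}
    (v : (Fin (n + 1) → A) → A → ℝ) (d : Fin (n + 1) → A) :
    ∑ c, ∑ a, (if Fin.snoc (Fin.tail c) a = d then (1 : ℝ) else 0) * v c a =
      ∑ α, v (shiftCtx α d) (d (Fin.last n)) := by
  rw [← (Fin.consEquiv fun _ => A).sum_comp, Fintype.sum_prod_type]
  have hsnoc : ∀ t a, Fin.snoc t a = d ↔ t = Fin.init d ∧ a = d (Fin.last n) := fun t a => by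
    rw [← Fin.snoc_init_self d, Fin.snoc_inj, Fin.init_snoc, Fin.snoc_last]
  refine sum_congr rfl fun α _ => ?_
  simp [Fin.consEquiv, hsnoc, ite_and]
  rfl

theorem stationaryConsistent_iff_sum_sum_mul_eq_zero {A : Type*} [Fintype A] [DecidableEq A]
    {n : ℕ} (v : (Fin (n + 1) → A) → A → ℝ) :
    StationaryConsistent v ↔ ∀ d, ∑ c, ∑ a,
      ((if Fin.snoc (Fin.tail c) a = d then (1 : ℝ) else 0) - if c = d then 1 else 0) * v c a =
        0 := by
  refine forall_congr' fun d => ?_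
  simp only [sub_mul, sum_sub_distrib]
  rw [sum_sum_ite_snoc_tail_mul]
  simp [ite_mul, sub_eq_zero]

section FirstOrder

variable {A : Type*} [Fintype A] {n m : ℕ} {G : Fin m → (Fin (n + 1) → A) → A → ℝ}
  {b : Fin m → ℝ} {u v : (Fin (n + 1) → A) → A → ℝ}

theorem hasDerivAt_J_add_mul (hu : ∀ c a, 0 ≤ u c a) (hv : ∀ c a, u c a = 0 → v c a = 0) :
    HasDerivAt (fun t => J fun c a => u c a + t * v c a)
      (-∑ c, ∑ a, v c a * Real.log (u c a / eta u c)) 0 :=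
  (HasDerivAt.fun_sum fun c _ => hasDerivAt_sum_mul_log_div_sum (hu c) (hv c)).neg

theorem feasible_add_mul (hu : Feasible G b u) (hv_mass : ∑ c, ∑ a, v c a = 0)
    (hv_stat : StationaryConsistent v) (hv_G : ∀ j, ∑ c, ∑ a, v c a * G j c a = 0) {t : ℝ}
    (ht : ∀ c a, 0 ≤ u c a + t * v c a) : Feasible G b fun c a => u c a + t * v c a := by
  obtain ⟨⟨-, hu_mass⟩, hu_stat, hu_G⟩ := hu
  refine ⟨⟨ht, ?_⟩, fun d => ?_, fun j => ?_⟩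
  · simp only [sum_add_distrib, ← mul_sum, hu_mass, hv_mass, mul_zero, add_zero]
  · simp only [sum_add_distrib, ← mul_sum, hu_stat d, hv_stat d]
  · simp only [add_mul, sum_add_distrib, mul_assoc, ← mul_sum, hu_G j, hv_G j, mul_zero,
      add_zero]

theorem eventually_nonneg_add_mul (hu : ∀ c a, 0 ≤ u c a)
    (hv : ∀ c a, u c a = 0 → v c a = 0) :
    ∀ᶠ t in 𝓝 (0 : ℝ), ∀ c a, 0 ≤ u c a + t * v c a := by
  simp only [Filter.eventually_all]
  intro c a
  rcases (hu c a).eq_or_lt with hca | hca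
  · simp [← hca, hv c a hca.symm]
  · have hcont : Continuous fun t : ℝ => u c a + t * v c a := by fun_prop
    filter_upwards [continuousAt_const.eventually_lt hcont.continuousAt (by simpa using hca)]
      with t ht using ht.le

theorem sum_mul_log_div_eta_eq_zero_of_maximizer (hu : Feasible G b u)
    (hmax : ∀ w, Feasible G b w → (∀ c a, ¬ 0 < u c a → w c a = 0) → J w ≤ J u)
    (hv_supp : ∀ c a, ¬ 0 < u c a → v c a = 0) (hv_mass : ∑ c, ∑ a, v c a = 0)
    (hv_stat : StationaryConsistent v) (hv_G : ∀ j, ∑ c, ∑ a, v c a * G j c a = 0) :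
    ∑ c, ∑ a, v c a * Real.log (u c a / eta u c) = 0 := by
  have hu_nonneg := hu.1.1
  have hv : ∀ c a, u c a = 0 → v c a = 0 := fun c a h => hv_supp c a h.not_gt
  have hmax_line : IsLocalMax (fun t => J fun c a => u c a + t * v c a) 0 := by
    filter_upwards [eventually_nonneg_add_mul hu_nonneg hv] with t ht
    simp only [zero_mul, add_zero]
    refine hmax _ (feasible_add_mul hu hv_mass hv_stat hv_G ht) fun c a hca => ?_
    rw [hv_supp c a hca, le_antisymm (not_lt.1 hca) (hu_nonneg c a), mul_zero, add_zero]
  simpa using hmax_line.hasDerivAt_eq_zero (hasDerivAt_J_add_mul hu_nonneg hv)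

end FirstOrder

def constraintTable {A : Type*} [DecidableEq A] {n m : ℕ}
    (G : Fin m → (Fin (n + 1) → A) → A → ℝ) :
    Unit ⊕ Fin m ⊕ (Fin (n + 1) → A) → (Fin (n + 1) → A) × A → ℝ
  | .inl _, _ => 1
  | .inr (.inl j), p => G j p.1 p.2
  | .inr (.inr d), p =>
    (if Fin.snoc (Fin.tail p.1) p.2 = d then 1 else 0) - if p.1 = d then 1 else 0

theorem stmt10_general {A : Type*} [Fintype A] {n m : ℕ}
    (G : Fin m → (Fin (n + 1) → A) → A → ℝ) (b : Fin m → ℝ)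
    (ustar : (Fin (n + 1) → A) → A → ℝ)
    (hfeas : Feasible G b ustar)
    (hmax : ∀ u, Feasible G b u → (∀ c a, ¬ 0 < ustar c a → u c a = 0) →
      J u ≤ J ustar) :
    ∃ (lam : Fin m → ℝ) (γ : ℝ) (ψ : (Fin (n + 1) → A) → ℝ),
      ∀ c a, 0 < ustar c a →
        Real.log (ustar c a / eta ustar c) =
          -γ - (∑ j, lam j * G j c a) - ψ c + ψ (Fin.snoc (Fin.tail c) a) := by
  classical
  obtain ⟨coef, hcoef⟩ := exists_eq_sum_mul_on_of_dotProduct_eq_zero (constraintTable G)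
    (fun p => Real.log (ustar p.1 p.2 / eta ustar p.1)) {p | 0 < ustar p.1 p.2}
    fun v hv_supp hv => by
      simp only [dotProduct, Fintype.sum_prod_type] at hv ⊢
      simp only [Sum.forall, constraintTable, one_mul] at hv
      obtain ⟨hv_mass, hv_G, hv_stat⟩ := hv
      simp only [mul_comm (Real.log _)]
      exact sum_mul_log_div_eta_eq_zero_of_maximizer hfeas hmax (fun c a => hv_supp (c, a))
        (hv_mass ()) ((stationaryConsistent_iff_sum_sum_mul_eq_zero _).2 hv_stat)
        fun j => by simpa only [mul_comm] using hv_G j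
  refine ⟨fun j => -coef (.inr (.inl j)), -coef (.inl ()), fun d => coef (.inr (.inr d)),
    fun c a hca => ?_⟩
  rw [hcoef (c, a) hca]
  simp only [constraintTable, Fintype.sum_sum_type, univ_unique, PUnit.default_eq_unit, mul_one,
    sum_singleton, mul_sub, mul_ite, mul_zero, sum_sub_distrib, sum_ite_eq, mem_univ, ↓reduceIte,
    neg_mul, sum_neg_distrib]
  ring

/-- Optimality (KKT) conditions.  If the feasible `u*` maximizes
`J` over the face of feasible laws vanishing off the support of `u*`, then
there are multipliers `λ`, `γ`, `ψ` such that on the support,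
`log(u*(c,a)/η_{u*}(c)) = −γ − ∑_j λ_j G_j(c,a) − ψ(c) + ψ(σ(c,a))`, where
`σ(c,a) = (c₂,…,c_r,a)` is the length-`r` suffix. -/
theorem stmt10 {A : Type*} [Fintype A] [Nonempty A] {n m : ℕ}
    (G : Fin m → (Fin (n + 1) → A) → A → ℝ) (b : Fin m → ℝ)
    (ustar : (Fin (n + 1) → A) → A → ℝ)
    (hfeas : Feasible G b ustar)
    (hmax : ∀ u, Feasible G b u → (∀ c a, ¬ 0 < ustar c a → u c a = 0) →
      J u ≤ J ustar) :
    ∃ (lam : Fin m → ℝ) (γ : ℝ) (ψ : (Fin (n + 1) → A) → ℝ),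
      ∀ c a, 0 < ustar c a →
        Real.log (ustar c a / eta ustar c) =
          -γ - (∑ j, lam j * G j c a) - ψ c + ψ (Fin.snoc (Fin.tail c) a) :=
  stmt10_general G b ustar hfeas hmax
end

section
/- Let K be a convex set of block laws on A^r × A, each of which is strictly positive (u(c,a) > 0 for all (c,a)). Suppose that for every u ∈ K and every distinct pair v, w ∈ K, there exists a context c ∈ A^r such that the row (v−w)(c,·) is not a scalar multiple of the row u(c,·). Then J is strictly concave on K: for all distinct u, v ∈ K and all t ∈ (0,1), J(t·u + (1−t)·v) > t·J(u) + (1−t)·J(v). In particular, if K is nonempty and compact, J has a unique maximizer on K. -/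
open Finset

/-!
Writing `J u = ∑_{c,a} u(c,a) · log (η_u(c) / u(c,a))`, each summand is the perspective
`(p, x) ↦ p · log (x / p)` of the logarithm evaluated at `(u(c,a), η_u(c))`.  Perspectives of
concave functions are concave, and strictly so between two points whose ratios `x / p` differ.
Hence `J` is concave on positive laws, and strict concavity between `u ≠ v` needs one cell with
`η_u(c) / u(c,a) ≠ η_v(c) / v(c,a)`; if there were none, the row `v(c,·)` would be a multiple of
`u(c,·)` for every `c`, and so would `(u - v)(c,·)`.
-/

section Perspective

variable {S : Set ℝ} {f : ℝ → ℝ} {a b p q x y : ℝ}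

private lemma perspective_weights (hp : 0 < p) (hq : 0 < q) (hP : 0 < a * p + b * q) :
    a * p / (a * p + b * q) * (x / p) + b * q / (a * p + b * q) * (y / q) =
        (a * x + b * y) / (a * p + b * q) ∧
      a * p / (a * p + b * q) + b * q / (a * p + b * q) = 1 := by
  constructor <;> field_simp

lemma ConcaveOn.mul_comp_div_add_le (hf : ConcaveOn ℝ S f) (ha : 0 < a) (hb : 0 < b)
    (hp : 0 < p) (hq : 0 < q) (hx : x / p ∈ S) (hy : y / q ∈ S) :
    a * (p * f (x / p)) + b * (q * f (y / q)) ≤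
      (a * p + b * q) * f ((a * x + b * y) / (a * p + b * q)) := by
  have hP : 0 < a * p + b * q := by positivity
  obtain ⟨harg, hw⟩ := perspective_weights (x := x) (y := y) hp hq hP
  have h := hf.2 hx hy (by positivity) (by positivity) hw
  rw [smul_eq_mul, smul_eq_mul, smul_eq_mul, smul_eq_mul, harg] at h
  calc a * (p * f (x / p)) + b * (q * f (y / q))
      = (a * p + b * q) * (a * p / (a * p + b * q) * f (x / p) +
          b * q / (a * p + b * q) * f (y / q)) := by field_simp
    _ ≤ _ := mul_le_mul_of_nonneg_left h hP.le

lemma StrictConcaveOn.mul_comp_div_add_lt (hf : StrictConcaveOn ℝ S f) (ha : 0 < a) (hb : 0 < b)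
    (hp : 0 < p) (hq : 0 < q) (hx : x / p ∈ S) (hy : y / q ∈ S)
    (hxy : x / p ≠ y / q) :
    a * (p * f (x / p)) + b * (q * f (y / q)) <
      (a * p + b * q) * f ((a * x + b * y) / (a * p + b * q)) := by
  have hP : 0 < a * p + b * q := by positivity
  obtain ⟨harg, hw⟩ := perspective_weights (x := x) (y := y) hp hq hP
  have h := hf.2 hx hy hxy (by positivity) (by positivity) hw
  rw [smul_eq_mul, smul_eq_mul, smul_eq_mul, smul_eq_mul, harg] at h
  calc a * (p * f (x / p)) + b * (q * f (y / q))
      = (a * p + b * q) * (a * p / (a * p + b * q) * f (x / p) +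
          b * q / (a * p + b * q) * f (y / q)) := by field_simp
    _ < _ := mul_lt_mul_of_pos_left h hP

end Perspective

lemma exists_sum_div_ne_of_forall_not_sub_eq_smul {A : Type*} [Fintype A] {p q : A → ℝ}
    (hp : ∀ a, 0 < p a) (hq : ∀ a, 0 < q a) (h : ¬ ∃ α : ℝ, ∀ a, p a - q a = α * p a) :
    ∃ a, (∑ b, p b) / p a ≠ (∑ b, q b) / q a := by
  by_contra! hratio
  refine h ⟨1 - (∑ b, q b) / ∑ b, p b, fun a => ?_⟩
  have hP : 0 < ∑ b, p b := sum_pos (fun b _ => hp b) ⟨a, mem_univ a⟩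
  have hQ : 0 < ∑ b, q b := sum_pos (fun b _ => hq b) ⟨a, mem_univ a⟩
  have := hratio a
  rw [div_eq_div_iff (hp a).ne' (hq a).ne'] at this
  field_simp
  linarith

section BlockLaw

variable {A : Type*} [Fintype A] {n : ℕ}

lemma eta_pos {u : (Fin (n + 1) → A) → A → ℝ} {c : Fin (n + 1) → A} (hu : ∀ a, 0 < u c a) :
    0 < eta u c :=
  sum_pos (fun a _ => hu a) ⟨c 0, mem_univ _⟩

lemma eta_smul_add_smul (u v : (Fin (n + 1) → A) → A → ℝ) (a b : ℝ) (c : Fin (n + 1) → A) :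
    eta (a • u + b • v) c = a * eta u c + b * eta v c := by
  simp only [eta, Pi.add_apply, Pi.smul_apply, smul_eq_mul, sum_add_distrib, ← mul_sum]

lemma J_eq_sum_mul_log_eta_div (u : (Fin (n + 1) → A) → A → ℝ) :
    J u = ∑ ca : (Fin (n + 1) → A) × A,
      u ca.1 ca.2 * Real.log (eta u ca.1 / u ca.1 ca.2) := by
  simp only [J, Fintype.sum_prod_type, ← sum_neg_distrib, ← mul_neg, ← Real.log_inv, inv_div]

lemma lt_J_smul_add_smul {u v : (Fin (n + 1) → A) → A → ℝ}
    (hu : ∀ c a, 0 < u c a) (hv : ∀ c a, 0 < v c a) {a b : ℝ} (ha : 0 < a) (hb : 0 < b) {c₀ : Fin (n + 1) → A} {a₀ : A}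
    (hne : eta u c₀ / u c₀ a₀ ≠ eta v c₀ / v c₀ a₀) :
    a * J u + b * J v < J (a • u + b • v) := by
  have hlog := strictConcaveOn_log_Ioi
  have hmem : ∀ {w : (Fin (n + 1) → A) → A → ℝ}, (∀ c a, 0 < w c a) →
      ∀ ca : (Fin (n + 1) → A) × A, eta w ca.1 / w ca.1 ca.2 ∈ Set.Ioi 0 :=
    fun hw ca => div_pos (eta_pos (hw ca.1)) (hw ca.1 ca.2)
  simp only [J_eq_sum_mul_log_eta_div, mul_sum, ← sum_add_distrib, Pi.add_apply, Pi.smul_apply,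
    smul_eq_mul, eta_smul_add_smul]
  refine sum_lt_sum (fun ca _ => ?_) ⟨(c₀, a₀), mem_univ _, ?_⟩
  · exact hlog.concaveOn.mul_comp_div_add_le ha hb (hu _ _) (hv _ _)
      (hmem hu ca) (hmem hv ca)
  · exact hlog.mul_comp_div_add_lt ha hb (hu _ _) (hv _ _)
      (hmem hu (c₀, a₀)) (hmem hv (c₀, a₀)) hne

lemma continuousOn_J : ContinuousOn (J (A := A) (n := n)) {u | ∀ c a, 0 < u c a} := by
  intro u hu
  refine ContinuousAt.continuousWithinAt <| ContinuousAt.neg <|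
    tendsto_finsetSum _ fun c _ => tendsto_finsetSum _ fun a _ => ?_
  have hη : Continuous fun w : (Fin (n + 1) → A) → A → ℝ => eta w c :=
    continuous_finsetSum _ fun b _ => by fun_prop
  have hratio : u c a / eta u c ≠ 0 := (div_pos (hu c a) (eta_pos (hu c))).ne'
  exact (continuous_apply_apply c a).continuousAt.mul <|
    ((continuous_apply_apply c a).continuousAt.div hη.continuousAt (eta_pos (hu c)).ne').log hratio

theorem strictConcaveOn_J (K : Set ((Fin (n + 1) → A) → A → ℝ)) (hK : Convex ℝ K)
    (hpos : ∀ u ∈ K, ∀ c a, 0 < u c a)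
    (hrow : ∀ u ∈ K, ∀ v ∈ K, u ≠ v → ∃ c, ¬ ∃ α : ℝ, ∀ a, u c a - v c a = α * u c a) :
    StrictConcaveOn ℝ K J := by
  refine ⟨hK, fun u hu v hv huv a b ha hb hab => ?_⟩
  obtain ⟨c, hc⟩ := hrow u hu v hv huv
  obtain ⟨a₀, ha₀⟩ := exists_sum_div_ne_of_forall_not_sub_eq_smul
    (hpos u hu c) (hpos v hv c) hc
  exact lt_J_smul_add_smul (hpos u hu) (hpos v hv) ha hb ha₀

end BlockLaw

theorem stmt13_general {A : Type*} [Fintype A] {n : ℕ}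
    (K : Set ((Fin (n + 1) → A) → A → ℝ)) (hK : Convex ℝ K)
    (hpos : ∀ u ∈ K, ∀ c a, 0 < u c a)
    (hrow : ∀ u ∈ K, ∀ v ∈ K, ∀ w ∈ K, v ≠ w →
      ∃ c, ¬ ∃ α : ℝ, ∀ a, v c a - w c a = α * u c a) :
    (∀ u ∈ K, ∀ v ∈ K, u ≠ v → ∀ t ∈ Set.Ioo (0 : ℝ) 1,
      t * J u + (1 - t) * J v < J (t • u + (1 - t) • v)) ∧
    (K.Nonempty → IsCompact K →
      ∃! ustar, ustar ∈ K ∧ ∀ u ∈ K, J u ≤ J ustar) := by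
  have hJ := strictConcaveOn_J K hK hpos fun u hu v hv => hrow u hu u hu v hv
  refine ⟨fun u hu v hv huv t ht => ?_, fun hne hcomp => ?_⟩
  · simpa using hJ.2 hu hv huv ht.1 (sub_pos.2 ht.2) (add_sub_cancel t 1)
  · obtain ⟨ustar, hmem, hmax⟩ :=
      hcomp.exists_isMaxOn hne (continuousOn_J.mono fun u hu => hpos u hu)
    exact ⟨ustar, ⟨hmem, fun u hu => hmax hu⟩,
      fun v hv => hJ.eq_of_isMaxOn (fun u hu => hv.2 u hu) hmax hv.1 hmem⟩

/-- On a convex set `K` of strictly positive block laws such that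
no difference of two distinct members of `K` has every row a scalar multiple of
the corresponding row of a member of `K`, the functional `J` is strictly
concave; if moreover `K` is nonempty and compact, `J` has a unique maximizer
on `K`. -/
theorem stmt13 {A : Type*} [Fintype A] [Nonempty A] {n : ℕ}
    (K : Set ((Fin (n + 1) → A) → A → ℝ)) (hK : Convex ℝ K)
    (hbl : ∀ u ∈ K, IsBlockLaw u)
    (hpos : ∀ u ∈ K, ∀ c a, 0 < u c a)
    (hrow : ∀ u ∈ K, ∀ v ∈ K, ∀ w ∈ K, v ≠ w →
      ∃ c, ¬ ∃ α : ℝ, ∀ a, v c a - w c a = α * u c a) :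
    (∀ u ∈ K, ∀ v ∈ K, u ≠ v → ∀ t ∈ Set.Ioo (0 : ℝ) 1,
      t * J u + (1 - t) * J v < J (t • u + (1 - t) • v)) ∧
    (K.Nonempty → IsCompact K →
      ∃! ustar, ustar ∈ K ∧ ∀ u ∈ K, J u ≤ J ustar) :=
  stmt13_general K hK hpos hrow
end

section
/- Let m ∈ (0,1) and define h : (0, min(m, 1−m)) → ℝ by h(q) := (1−m)·h₂(q/(1−m)) + m·h₂(q/m). Then q* := m(1−m) lies in the interval (0, min(m, 1−m)), h(q*) = h₂(m), and q* is the unique maximizer of h: for every q ∈ (0, min(m, 1−m)) with q ≠ m(1−m), one has h(q) < h₂(m). -/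
open Finset

/-- Binary entropy with natural logarithm.  In Lean, `Real.log 0 = 0` and
`0 * x = 0`, so the convention `0·log 0 = 0` holds automatically. -/
noncomputable def h2 (p : ℝ) : ℝ := -p * Real.log p - (1 - p) * Real.log (1 - p)

lemma h2_scaled (a q : ℝ) (ha : 0 < a) (hq : 0 < q) (hqa : q < a) :
    a * h2 (q / a) = -q * Real.log q - (a - q) * Real.log (a - q) + a * Real.log a := by
  have h1 : Real.log (q / a) = Real.log q - Real.log a := Real.log_div hq.ne' ha.ne'
  have h2' : (1 : ℝ) - q / a = (a - q) / a := by field_simp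
  have h3 : Real.log ((a - q) / a) = Real.log (a - q) - Real.log a :=
    Real.log_div (by linarith) ha.ne'
  unfold h2
  rw [h1, h2', h3]
  field_simp
  ring

/-- For `m ∈ (0,1)` and
`h(q) = (1−m)h₂(q/(1−m)) + m·h₂(q/m)` on `(0, min m (1−m))`, the point
`q* = m(1−m)` lies in the interval, `h(q*) = h₂(m)`, and `q*` is the unique
maximizer: `h(q) < h₂(m)` for every other admissible `q`. -/
theorem stmt17 (m : ℝ) (hm : m ∈ Set.Ioo (0 : ℝ) 1) :
    m * (1 - m) ∈ Set.Ioo (0 : ℝ) (min m (1 - m)) ∧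
    (1 - m) * h2 ((m * (1 - m)) / (1 - m)) + m * h2 ((m * (1 - m)) / m) = h2 m ∧
    ∀ q ∈ Set.Ioo (0 : ℝ) (min m (1 - m)), q ≠ m * (1 - m) →
      (1 - m) * h2 (q / (1 - m)) + m * h2 (q / m) < h2 m := by
  obtain ⟨hm0, hm1⟩ := hm
  have ha : 0 < 1 - m := by linarith
  have hq0 : 0 < m * (1 - m) := by positivity
  have hqlt1 : m * (1 - m) < 1 - m := by nlinarith
  have hqltm : m * (1 - m) < m := by nlinarith
  refine ⟨⟨hq0, lt_min hqltm hqlt1⟩, ?_, ?_⟩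
  · rw [h2_scaled (1 - m) (m * (1 - m)) ha hq0 hqlt1,
      h2_scaled m (m * (1 - m)) hm0 hq0 hqltm]
    have hA : 1 - m - m * (1 - m) = (1 - m) ^ 2 := by ring
    have hB : m - m * (1 - m) = m ^ 2 := by ring
    have hlq : Real.log (m * (1 - m)) = Real.log m + Real.log (1 - m) :=
      Real.log_mul hm0.ne' ha.ne'
    have hlA : Real.log ((1 - m) ^ 2) = 2 * Real.log (1 - m) := by
      rw [Real.log_pow]; push_cast; ring
    have hlB : Real.log (m ^ 2) = 2 * Real.log m := by
      rw [Real.log_pow]; push_cast; ring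
    rw [hA, hB, hlq, hlA, hlB]
    unfold h2
    ring
  · intro q hq hne
    obtain ⟨hq0', hqlt⟩ := hq
    have hq1m : q < 1 - m := lt_of_lt_of_le hqlt (min_le_right _ _)
    have hqm : q < m := lt_of_lt_of_le hqlt (min_le_left _ _)
    rw [h2_scaled (1 - m) q ha hq0' hq1m, h2_scaled m q hm0 hq0' hqm]
    -- log expansions
    have l1 : Real.log (m * (1 - m) / q) =
        Real.log m + Real.log (1 - m) - Real.log q := by
      rw [Real.log_div (by positivity) hq0'.ne', Real.log_mul hm0.ne' ha.ne']
    have l2 : Real.log ((1 - m) ^ 2 / (1 - m - q)) =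
        2 * Real.log (1 - m) - Real.log (1 - m - q) := by
      rw [Real.log_div (by positivity) (by linarith), Real.log_pow]; push_cast; ring
    have l3 : Real.log (m ^ 2 / (m - q)) =
        2 * Real.log m - Real.log (m - q) := by
      rw [Real.log_div (by positivity) (by linarith), Real.log_pow]; push_cast; ring
    -- strict term
    have hne1 : m * (1 - m) / q ≠ 1 := by
      intro h
      apply hne
      field_simp at h
      linarith
    have t1 := Real.log_lt_sub_one_of_pos (by positivity : 0 < m * (1 - m) / q) hne1
    rw [l1] at t1
    have hAq : (0:ℝ) < 1 - m - q := by linarith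
    have hBq : (0:ℝ) < m - q := by linarith
    have t2 := Real.log_le_sub_one_of_pos
      (div_pos (by positivity : (0:ℝ) < (1 - m) ^ 2) hAq)
    rw [l2] at t2
    have t3 := Real.log_le_sub_one_of_pos (div_pos (by positivity : (0:ℝ) < m ^ 2) hBq)
    rw [l3] at t3
    have T1 : 2 * q * (Real.log m + Real.log (1 - m) - Real.log q) <
        2 * m * (1 - m) - 2 * q := by
      have h := mul_lt_mul_of_pos_left t1 (by linarith : (0:ℝ) < 2 * q)
      have e : 2 * q * (m * (1 - m) / q - 1) = 2 * m * (1 - m) - 2 * q := by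
        field_simp
      linarith
    have T2 : (1 - m - q) * (2 * Real.log (1 - m) - Real.log (1 - m - q)) ≤
        (1 - m) ^ 2 - (1 - m - q) := by
      have h := mul_le_mul_of_nonneg_left t2 (by linarith : (0:ℝ) ≤ 1 - m - q)
      have e : (1 - m - q) * ((1 - m) ^ 2 / (1 - m - q) - 1) =
          (1 - m) ^ 2 - (1 - m - q) := by
        field_simp [hAq.ne']
      linarith
    have T3 : (m - q) * (2 * Real.log m - Real.log (m - q)) ≤ m ^ 2 - (m - q) := by
      have h := mul_le_mul_of_nonneg_left t3 (by linarith : (0:ℝ) ≤ m - q)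
      have e : (m - q) * (m ^ 2 / (m - q) - 1) = m ^ 2 - (m - q) := by
        field_simp [hBq.ne']
      linarith
    unfold h2
    nlinarith [T1, T2, T3]
end
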